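/- arXiv:2406.17150 — 2 statements merged into one kernel-verified Lean document; each statement's English description precedes it below -/
import Mathlib

section
/- Let E be a class of binary classifiers on ℝ closed under translation with VC dimension m (so E shatters some m-point set), and let n ≥ 1. Define the class H of piecewise classifiers: choose thresholds t_1 < t_2 < ⋯ < t_{n-1} partitioning ℝ into n intervals and classifiers e_1, …, e_n ∈ E, and let h(x) = e_i(x) for x in the i-th interval. Then H shatters a set of nm points, so VCD(H) ≥ nm. -/
def Shatters {X : Type*} (H : Set (X → Bool)) (S : Finset X) : Prop :=
  ∀ y : X → Bool, ∃ h ∈ H, ∀ x ∈ S, h x = y x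

def ClosedUnderTranslation (F : Set (ℝ → Bool)) : Prop :=
  ∀ f ∈ F, ∀ a : ℝ, (fun x => f (x + a)) ∈ F

/-- Top-expert MOE classifiers: `n - 1` strictly increasing thresholds partition ℝ into `n`
intervals; on the `i`-th interval the classifier applies expert `e i` from `E`.
The interval index of `x` is the number of thresholds `≤ x`. -/
def MOE (E : Set (ℝ → Bool)) (n : ℕ) : Set (ℝ → Bool) :=
  {h | ∃ t : Fin (n - 1) → ℝ, StrictMono t ∧ ∃ e : ℕ → (ℝ → Bool), (∀ i, e i ∈ E) ∧
    h = fun x => e ((Finset.univ.filter fun i : Fin (n - 1) => t i ≤ x).card) x}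

lemma card_filter_fin_lt (N i : ℕ) (h : i ≤ N) :
    (Finset.univ.filter fun j : Fin N => (j:ℕ) < i).card = i := by
  have : (Finset.univ.filter fun j : Fin N => (j:ℕ) < i).card = (Finset.range i).card := by
    refine Finset.card_bij (fun j _ => (j:ℕ)) ?_ ?_ ?_
    · intro a ha; simp at ha ⊢; exact ha
    · intro a ha b hb hab; exact Fin.val_injective hab
    · intro a ha; simp at ha
      exact ⟨⟨a, lt_of_lt_of_le ha h⟩, by simp [ha], rfl⟩
  simp [this]

theorem stmt_13 (E : Set (ℝ → Bool)) (hE : ClosedUnderTranslation E) (m : ℕ)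
    (hVC : ∃ S : Finset ℝ, S.card = m ∧ Shatters E S) (n : ℕ) (hn : 1 ≤ n) :
    ∃ S : Finset ℝ, S.card = n * m ∧ Shatters (MOE E n) S := by
  obtain ⟨S₀, hcard, hshat⟩ := hVC
  set B : ℝ := 1 + ∑ s ∈ S₀, |s| with hBdef
  have hsum : ∀ s ∈ S₀, |s| ≤ ∑ s ∈ S₀, |s| := by
    intro s hs
    exact Finset.single_le_sum (fun t _ => abs_nonneg t) hs
  have hB : ∀ s ∈ S₀, |s| < B := by
    intro s hs
    have := hsum s hs
    simp only [hBdef]; linarith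
  have hBpos : 0 < B := by
    have : (0:ℝ) ≤ ∑ s ∈ S₀, |s| := Finset.sum_nonneg fun t _ => abs_nonneg t
    simp only [hBdef]; linarith
  set c : ℝ := 2 * B with hcdef
  have hcpos : 0 < c := by simp only [hcdef]; linarith
  -- the shattered set: n translated copies of S₀
  set S : Finset ℝ := (Finset.range n).biUnion
    (fun i => S₀.image (fun s => s + i * c)) with hSdef
  have hdisj : ∀ i ∈ Finset.range n, ∀ i' ∈ Finset.range n, i ≠ i' →
      Disjoint (S₀.image (fun s => s + i * c)) (S₀.image (fun s => s + i' * c)) := by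
    intro i _ i' _ hne
    rw [Finset.disjoint_left]
    rintro x hx hx'
    simp only [Finset.mem_image] at hx hx'
    obtain ⟨s, hs, rfl⟩ := hx
    obtain ⟨s', hs', heq⟩ := hx'
    have h1 : (1:ℝ) ≤ |(i:ℝ) - (i':ℝ)| := by
      have h0 : (i:ℤ) - (i':ℤ) ≠ 0 := sub_ne_zero.mpr (by exact_mod_cast hne)
      have := Int.one_le_abs h0
      have : (1:ℝ) ≤ |(((i:ℤ) - (i':ℤ) : ℤ) : ℝ)| := by exact_mod_cast this
      push_cast at this
      exact this
    have habs : |(i:ℝ) - (i':ℝ)| * c = |s - s'| := by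
      have : ((i:ℝ) - (i':ℝ)) * c = s' - s := by linarith [heq]
      calc |(i:ℝ) - (i':ℝ)| * c = |((i:ℝ) - (i':ℝ)) * c| := by
            rw [abs_mul, abs_of_pos hcpos]
        _ = |s' - s| := by rw [this]
        _ = |s - s'| := abs_sub_comm _ _
    have hss' : |s - s'| < 2 * B := by
      have h2 := hB s hs
      have h3 := hB s' hs'
      have := abs_sub s s'
      linarith
    have hge : c ≤ |(i:ℝ) - (i':ℝ)| * c :=
      le_mul_of_one_le_left (le_of_lt hcpos) h1
    rw [habs] at hge
    simp only [hcdef] at hge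
    linarith
  have hScard : S.card = n * m := by
    rw [hSdef, Finset.card_biUnion hdisj]
    have : ∀ i ∈ Finset.range n, (S₀.image (fun s => s + i * c)).card = m := by
      intro i _
      rw [Finset.card_image_of_injective _ (add_left_injective _), hcard]
    rw [Finset.sum_congr rfl this]
    simp [Finset.sum_const, mul_comm]
  refine ⟨S, hScard, ?_⟩
  intro y
  choose f hfE hfy using fun i : ℕ => hshat (fun s => y (s + i * c))
  set t : Fin (n - 1) → ℝ := fun j => ((j:ℕ) + 1/2) * c with htdef
  have htmono : StrictMono t := by
    intro j j' hjj'
    have : ((j:ℕ):ℝ) < ((j':ℕ):ℝ) := by exact_mod_cast hjj'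
    simp only [htdef]
    have := mul_lt_mul_of_pos_right (by linarith : ((j:ℕ):ℝ) + 1/2 < ((j':ℕ):ℝ) + 1/2) hcpos
    exact this
  set e : ℕ → (ℝ → Bool) := fun i x => f i (x + -(i * c)) with hedef
  have heE : ∀ i, e i ∈ E := fun i => hE (f i) (hfE i) (-(i * c))
  refine ⟨fun x => e ((Finset.univ.filter fun j : Fin (n - 1) => t j ≤ x).card) x,
    ⟨t, htmono, e, heE, rfl⟩, ?_⟩
  intro x hx
  simp only [hSdef, Finset.mem_biUnion, Finset.mem_range, Finset.mem_image] at hx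
  obtain ⟨i, hi, s, hs, rfl⟩ := hx
  have hsB := abs_lt.mp (hB s hs)
  have hidx : (Finset.univ.filter fun j : Fin (n - 1) => t j ≤ s + i * c).card = i := by
    have hfe : (Finset.univ.filter fun j : Fin (n - 1) => t j ≤ s + i * c)
        = Finset.univ.filter fun j : Fin (n - 1) => (j:ℕ) < i := by
      apply Finset.filter_congr
      intro j _
      simp only [htdef, eq_iff_iff]
      constructor
      · intro hle
        by_contra hnot
        have hij : (i:ℝ) ≤ ((j:ℕ):ℝ) := by exact_mod_cast Nat.le_of_not_lt hnot
        have : ((i:ℝ) + 1/2) * c ≤ (((j:ℕ):ℝ) + 1/2) * c :=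
          mul_le_mul_of_nonneg_right (by linarith) (le_of_lt hcpos)
        simp only [hcdef] at this hle
        nlinarith
      · intro hlt
        have hj1 : ((j:ℕ):ℝ) + 1 ≤ (i:ℝ) := by exact_mod_cast Nat.succ_le_of_lt hlt
        have : (((j:ℕ):ℝ) + 1/2) * c ≤ ((i:ℝ) - 1/2) * c :=
          mul_le_mul_of_nonneg_right (by linarith) (le_of_lt hcpos)
        simp only [hcdef] at this ⊢
        nlinarith
    rw [hfe]
    exact card_filter_fin_lt _ _ (Nat.le_sub_one_of_lt hi)
  beta_reduce
  rw [hidx]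
  have harg : s + (i:ℝ) * c + -((i:ℕ) * c) = s := by push_cast; ring
  simp only [hedef, harg]
  exact hfy i s hs
end

section
/- The class of piecewise-linear classifiers on ℝ with n pieces (partition ℝ into n intervals by n−1 thresholds, use an affine-sign classifier x ↦ (if w_i x + b_i > 0 then 1 else 0) on each interval) has VC dimension at least 2n. -/
/-- Affine-sign classifiers on ℝ. -/
def LinClass1 : Set (ℝ → Bool) :=
  {h | ∃ w b : ℝ, h = fun x => decide (w * x + b > 0)}

lemma aux_card (N m : ℕ) (h : m ≤ N) :
    (Finset.univ.filter fun j : Fin N => (j : ℕ) < m).card = m := by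
  have he : (Finset.univ.filter fun j : Fin N => (j : ℕ) < m) =
      (Finset.range m).attachFin (fun k hk => lt_of_lt_of_le (Finset.mem_range.mp hk) h) := by
    ext a
    simp [Finset.mem_attachFin]
  rw [he, Finset.card_attachFin, Finset.card_range]

theorem stmt_15 (n : ℕ) (hn : 1 ≤ n) :
    ∃ S : Finset ℝ, S.card = 2 * n ∧ Shatters (MOE LinClass1 n) S := by
  refine ⟨(Finset.range (2 * n)).image (fun k : ℕ => (k : ℝ)), ?_, ?_⟩
  · rw [Finset.card_image_of_injective _ Nat.cast_injective, Finset.card_range]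
  · intro y
    set v : ℕ → ℝ := fun k => if y (k : ℝ) then 1 else -1 with hv
    set w : ℕ → ℝ := fun i => v (2 * i + 1) - v (2 * i) with hw
    set b : ℕ → ℝ := fun i => v (2 * i) - (2 * i : ℕ) * w i with hb
    refine ⟨fun x => (fun i x => decide (w i * x + b i > 0))
        ((Finset.univ.filter fun j : Fin (n - 1) => 2 * (j : ℝ) + 3 / 2 ≤ x).card) x,
      ⟨fun j => 2 * (j : ℝ) + 3 / 2, ?_, fun i x => decide (w i * x + b i > 0),
        fun i => ⟨w i, b i, rfl⟩, rfl⟩, ?_⟩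
    · intro a c hac
      have : (a : ℝ) < (c : ℝ) := by exact_mod_cast hac
      dsimp only
      linarith
    · intro x hx
      obtain ⟨k, hk, rfl⟩ := Finset.mem_image.mp hx
      have hk2 : k < 2 * n := Finset.mem_range.mp hk
      have hfilt : (Finset.univ.filter fun j : Fin (n - 1) =>
          2 * (j : ℝ) + 3 / 2 ≤ (k : ℝ)).card = k / 2 := by
        have hcong : (Finset.univ.filter fun j : Fin (n - 1) =>
            2 * (j : ℝ) + 3 / 2 ≤ (k : ℝ)) =
            (Finset.univ.filter fun j : Fin (n - 1) => (j : ℕ) < k / 2) := by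
          apply Finset.filter_congr
          intro j _
          constructor
          · intro hle
            have h1 : ((2 * (j : ℕ) + 1 : ℕ) : ℝ) < (k : ℝ) := by push_cast; linarith
            have h2 : 2 * (j : ℕ) + 1 < k := by exact_mod_cast h1
            omega
          · intro hlt
            have h2 : 2 * (j : ℕ) + 2 ≤ k := by omega
            have h1 : ((2 * (j : ℕ) + 2 : ℕ) : ℝ) ≤ (k : ℝ) := by exact_mod_cast h2
            push_cast at h1
            linarith
        rw [hcong, aux_card _ _ (by omega)]
      dsimp only
      rw [hfilt]
      have hval : w (k / 2) * (k : ℝ) + b (k / 2) = v k := by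
        rw [hw, hb]
        dsimp only
        rcases Nat.even_or_odd k with ⟨i, rfl⟩ | ⟨i, rfl⟩
        · rw [show (i + i) / 2 = i from by omega, show i + i = 2 * i from by ring]
          push_cast
          ring
        · rw [show (2 * i + 1) / 2 = i from by omega]
          push_cast
          ring
      rw [hval, hv]
      by_cases hy : y (k : ℝ) <;> simp [hy]
end
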